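/- arXiv:0912.5259 — 2 statements merged into one kernel-verified Lean document; each statement's English description precedes it below -/
import Mathlib

section
/- Let K be a field of characteristic not 2 and let τ be the K-automorphism of K(x,y) with τ(x) = −x and τ(y) = f(x²)·N_τ(g(x))/y, where f, g ∈ K[x] and N_τ(g(x)) = g(x)g(−x). Set y' = y/g(x), X = (y' + f(x²)/y')/2, Y = (y' − f(x²)/y')/(2x), Z = x². Then K(x,y)^⟨τ⟩ = K(X, Y, Z) and these generators satisfy the relation X² − Z·Y² = f(Z). -/
/-!
The generators `X`, `Y`, `Z = x²` are `τ`-invariant and `y = (X + x * Y) * g(x)`, so `K(x, y)` is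
obtained from `L = K(X, Y, Z)` by adjoining the square root `x` of `Z ∈ L`. Every element of
`L(x)` is then `u + v * x` with `u, v ∈ L`, and `τ` maps it to `u - v * x`; so the invariants are
exactly `L`. The relation is the norm identity `(X + x * Y) * (X - x * Y) = y' * (f(x²) / y')`.
-/

open MvPolynomial IntermediateField

section

variable {K F : Type*} [Field K] [Field F] [Algebra K F]

theorem IntermediateField.mem_fixedField_zpowers_iff {σ : F ≃ₐ[K] F} {a : F} :
    a ∈ fixedField (Subgroup.zpowers σ) ↔ σ a = a :=
  ⟨fun h ↦ h ⟨σ, Subgroup.mem_zpowers σ⟩, fun h ρ ↦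
    Subgroup.zpowers_le.mpr (show σ ∈ MulAction.stabilizer (F ≃ₐ[K] F) a from h) ρ.2⟩

theorem IntermediateField.adjoin_range_X_eq_top {ι : Type*} [Algebra (MvPolynomial ι K) F]
    [IsScalarTower K (MvPolynomial ι K) F] [IsFractionRing (MvPolynomial ι K) F] :
    adjoin K (Set.range fun i ↦ algebraMap (MvPolynomial ι K) F (X i)) = ⊤ := by
  refine eq_top_iff.mpr fun a _ ↦ ?_
  obtain ⟨p, q, -, rfl⟩ := IsFractionRing.div_surjective (A := MvPolynomial ι K) a
  rw [mem_adjoin_range_iff]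
  refine ⟨p, q, ?_⟩
  simp only [← Function.comp_def (algebraMap _ F) X]
  rw [← IsScalarTower.coe_toAlgHom' K (MvPolynomial ι K) F, ← aeval_unique]

theorem IntermediateField.exists_add_mul_of_mem_adjoin_insert {L : IntermediateField K F} {x : F}
    (hx : x ^ 2 ∈ L) {a : F} (ha : a ∈ adjoin K (insert x (L : Set F))) :
    ∃ u ∈ L, ∃ v ∈ L, a = u + v * x := by
  induction ha using adjoin_induction with
  | mem b hb =>
    rcases hb with rfl | hb
    · exact ⟨0, zero_mem _, 1, one_mem _, by ring⟩
    · exact ⟨b, hb, 0, zero_mem _, by ring⟩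
  | algebraMap c => exact ⟨algebraMap K F c, algebraMap_mem _ c, 0, zero_mem _, by ring⟩
  | add b c _ _ hb hc =>
    obtain ⟨u₁, hu₁, v₁, hv₁, rfl⟩ := hb
    obtain ⟨u₂, hu₂, v₂, hv₂, rfl⟩ := hc
    exact ⟨u₁ + u₂, add_mem hu₁ hu₂, v₁ + v₂, add_mem hv₁ hv₂, by ring⟩
  | mul b c _ _ hb hc =>
    obtain ⟨u₁, hu₁, v₁, hv₁, rfl⟩ := hb
    obtain ⟨u₂, hu₂, v₂, hv₂, rfl⟩ := hc
    refine ⟨u₁ * u₂ + v₁ * v₂ * x ^ 2, add_mem (mul_mem hu₁ hu₂) (mul_mem (mul_mem hv₁ hv₂) hx),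
      u₁ * v₂ + u₂ * v₁, add_mem (mul_mem hu₁ hv₂) (mul_mem hu₂ hv₁), by ring⟩
  | inv b _ hb =>
    obtain ⟨u, hu, v, hv, rfl⟩ := hb
    set d := u ^ 2 - v ^ 2 * x ^ 2
    have hdL : d ∈ L := sub_mem (pow_mem hu 2) (mul_mem (pow_mem hv 2) hx)
    by_cases hd0 : d = 0
    · -- `u + v * x` is then `2 * u` or `0`
      have : (u - v * x) * (u + v * x) = 0 := by linear_combination hd0
      rcases mul_eq_zero.mp this with h | h
      · refine ⟨(2 * u)⁻¹, inv_mem (mul_mem (ofNat_mem L 2) hu), 0, zero_mem _, ?_⟩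
        rw [show u + v * x = 2 * u by linear_combination -h]
        ring
      · exact ⟨0, zero_mem _, 0, zero_mem _, by rw [h]; simp⟩
    · refine ⟨u / d, div_mem hu hdL, -v / d, div_mem (neg_mem hv) hdL, ?_⟩
      refine inv_eq_of_mul_eq_one_right ?_
      field_simp
      ring

theorem IntermediateField.fixedField_zpowers_eq {L : IntermediateField K F} {σ : F ≃ₐ[K] F}
    {x : F} (h2 : (2 : F) ≠ 0) (hx0 : x ≠ 0) (hσx : σ x = -x) (hx : x ^ 2 ∈ L)
    (hσL : L ≤ fixedField (Subgroup.zpowers σ)) (htop : adjoin K (insert x (L : Set F)) = ⊤) :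
    fixedField (Subgroup.zpowers σ) = L := by
  refine le_antisymm (fun a ha ↦ ?_) hσL
  have hσa : σ a = a := ha ⟨σ, Subgroup.mem_zpowers σ⟩
  obtain ⟨u, hu, v, hv, rfl⟩ := exists_add_mul_of_mem_adjoin_insert (a := a) hx (htop ▸ mem_top)
  have hσL' {b : F} (hb : b ∈ L) : σ b = b := mem_fixedField_zpowers_iff.mp (hσL hb)
  rw [map_add, map_mul, hσL' hu, hσL' hv, hσx] at hσa
  have hv0 : v = 0 := by
    have : 2 * x * v = 0 := by linear_combination -hσa
    simpa [h2, hx0] using this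
  simpa [hv0] using hu

section NormCoordinates

variable {c x y X Y : F}

theorem sq_sub_sq_mul_sq_eq_of_eq_div (h2 : (2 : F) ≠ 0) (hx : x ≠ 0) (hy : y ≠ 0)
    (hX : X = (y + c / y) / 2) (hY : Y = (y - c / y) / (2 * x)) :
    X ^ 2 - x ^ 2 * Y ^ 2 = c := by
  subst hX hY
  field_simp
  ring

theorem add_mul_eq_of_eq_div (h2 : (2 : F) ≠ 0) (hx : x ≠ 0)
    (hX : X = (y + c / y) / 2) (hY : Y = (y - c / y) / (2 * x)) :
    X + x * Y = y := by
  rw [hX, hY, mul_div_left_comm, div_mul_cancel_right₀ hx, ← div_eq_mul_inv, ← add_div,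
    div_eq_iff h2]
  ring

variable {σ : F ≃ₐ[K] F}

theorem isFixedPt_add_div_div_two (hc : c ≠ 0) (hy : y ≠ 0) (hσc : σ c = c)
    (hσy : σ y = c / y) : Function.IsFixedPt σ ((y + c / y) / 2) := by
  rw [Function.IsFixedPt, map_div₀, map_add, map_div₀, hσc, hσy, map_ofNat]
  field_simp
  ring

theorem isFixedPt_sub_div_div_two_mul (hc : c ≠ 0) (hy : y ≠ 0) (hσc : σ c = c)
    (hσy : σ y = c / y) (hσx : σ x = -x) : Function.IsFixedPt σ ((y - c / y) / (2 * x)) := by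
  rw [Function.IsFixedPt, map_div₀, map_sub, map_div₀, hσc, hσy, map_mul, map_ofNat, hσx]
  field_simp
  ring

end NormCoordinates

end

theorem fixed_field_thInv (K F : Type*) [Field K] [Field F]
    [Algebra K F] [Algebra (MvPolynomial (Fin 2) K) F]
    [IsScalarTower K (MvPolynomial (Fin 2) K) F]
    [IsFractionRing (MvPolynomial (Fin 2) K) F]
    (h2 : (2 : K) ≠ 0)
    (f g : Polynomial K)
    (x y : F)
    (hx : x = algebraMap (MvPolynomial (Fin 2) K) F (X 0))
    (hy : y = algebraMap (MvPolynomial (Fin 2) K) F (X 1))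
    (hf : Polynomial.aeval (x ^ 2) f ≠ 0)
    (hg : Polynomial.aeval x g ≠ 0)
    (τ : F ≃ₐ[K] F)
    (hτx : τ x = -x)
    (hτy : τ y = Polynomial.aeval (x ^ 2) f *
        (Polynomial.aeval x g * Polynomial.aeval (-x) g) / y)
    (y' Xg Yg Zg : F)
    (hy' : y' = y / Polynomial.aeval x g)
    (hX : Xg = (y' + Polynomial.aeval (x ^ 2) f / y') / 2)
    (hY : Yg = (y' - Polynomial.aeval (x ^ 2) f / y') / (2 * x))
    (hZ : Zg = x ^ 2) :
    fixedField (Subgroup.zpowers τ) = adjoin K {Xg, Yg, Zg} ∧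
      Xg ^ 2 - Zg * Yg ^ 2 = Polynomial.aeval Zg f := by
  have hinj := IsFractionRing.injective (MvPolynomial (Fin 2) K) F
  have hx0 : x ≠ 0 := hx ▸ (map_ne_zero_iff _ hinj).mpr (X_ne_zero 0)
  have hy0 : y ≠ 0 := hy ▸ (map_ne_zero_iff _ hinj).mpr (X_ne_zero 1)
  have h2F : (2 : F) ≠ 0 := map_ofNat (algebraMap K F) 2 ▸ (map_ne_zero _).mpr h2
  have hy'0 : y' ≠ 0 := hy' ▸ div_ne_zero hy0 hg
  have hτx2 : τ (x ^ 2) = x ^ 2 := by rw [map_pow, hτx, neg_sq]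
  have hτf : τ (Polynomial.aeval (x ^ 2) f) = Polynomial.aeval (x ^ 2) f := by
    rw [← Polynomial.aeval_algHom_apply, hτx2]
  have hτg : τ (Polynomial.aeval x g) = Polynomial.aeval (-x) g := by
    rw [← Polynomial.aeval_algHom_apply, hτx]
  have hgn : Polynomial.aeval (-x) g ≠ 0 := hτg ▸ (map_ne_zero τ).mpr hg
  have hτy' : τ y' = Polynomial.aeval (x ^ 2) f / y' := by
    rw [hy', map_div₀, hτy, hτg]
    field_simp
  set L := adjoin K {Xg, Yg, Zg}
  have hXL : Xg ∈ L := subset_adjoin _ _ (by simp)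
  have hYL : Yg ∈ L := subset_adjoin _ _ (by simp)
  have hZL : Zg ∈ L := subset_adjoin _ _ (by simp)
  have hLτ : L ≤ fixedField (Subgroup.zpowers τ) := by
    simp only [L, adjoin_le_iff, Set.insert_subset_iff, Set.singleton_subset_iff, SetLike.mem_coe,
      mem_fixedField_zpowers_iff]
    exact ⟨hX ▸ isFixedPt_add_div_div_two hf hy'0 hτf hτy',
      hY ▸ isFixedPt_sub_div_div_two_mul hf hy'0 hτf hτy' hτx, hZ ▸ hτx2⟩
  have htop : adjoin K (insert x (L : Set F)) = ⊤ := by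
    set M := adjoin K (insert x (L : Set F))
    have hxM : x ∈ M := subset_adjoin _ _ (Set.mem_insert _ _)
    have hLM {b : F} (hb : b ∈ L) : b ∈ M := subset_adjoin _ _ (Set.mem_insert_of_mem _ hb)
    have hgM : Polynomial.aeval x g ∈ M := aeval_coe M ⟨x, hxM⟩ g ▸ (Polynomial.aeval (⟨x, hxM⟩ : M) g).2
    have hyM : y ∈ M := by
      rw [show y = (Xg + x * Yg) * Polynomial.aeval x g by
        rw [add_mul_eq_of_eq_div h2F hx0 hX hY, hy', div_mul_cancel₀ _ hg]]
      exact mul_mem (add_mem (hLM hXL) (mul_mem hxM (hLM hYL))) hgM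
    rw [eq_top_iff, ← adjoin_range_X_eq_top (K := K) (ι := Fin 2) (F := F), adjoin_le_iff,
      Set.range_subset_iff, Fin.forall_fin_two, ← hx, ← hy]
    exact ⟨hxM, hyM⟩
  refine ⟨fixedField_zpowers_eq h2F hx0 hτx (hZ ▸ hZL) hLτ htop, ?_⟩
  rw [hZ]
  exact sq_sub_sq_mul_sq_eq_of_eq_div h2F hx0 hy'0 hX hY
end

section
/- Let K be a field of characteristic not 2, f ∈ K^×, and let u₁, u₂, u₃ be independent transcendentals over K. Let σ be the K-automorphism of K(u₁,u₂,u₃) of order 2 defined by σ(u₁) = −u₁, σ(u₂) = (3u₁² + 1)/u₂, σ(u₃) = f/u₃. Then K(u₁,u₂,u₃)^⟨σ⟩ = K(r₁, r₂, r₃), where r₁ = (u₃² + f)/u₃, r₂ = u₁u₂/(3u₁² − u₂² + 1), and r₃ = (3u₁² + u₂² + 2u₂ + 1)(u₃² − f)/((3u₁² − u₂² + 1)u₃). In particular this fixed field is rational over K. -/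
/-!
Put `L = K(r₁, r₂, r₃)`. Since `u₃² = r₁ u₃ - f`, every element of `L(u₃)` has the form
`p + q u₃` with `p, q ∈ L`; and `L(u₃)` is everything, because `u₂` and `u₁` are rational
functions of `r₂` and `(r₃ u₃ / (u₃² - f) - 1) / 2 = u₂ (u₂ + 1) / (3u₁² - u₂² + 1)`.
A direct computation shows that `σ` fixes `r₁, r₂, r₃`. Conversely, if `p + q u₃` is fixed and
`q ≠ 0`, then `u₃` is fixed, which is impossible since `σ u₃ = f / u₃` and `u₃² ≠ f`.
-/

open MvPolynomial IntermediateField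

namespace IntermediateField

variable {K F : Type*} [Field K] [Field F] [Algebra K F]

theorem mem_fixedField_zpowers_iff_s17 {σ : F ≃ₐ[K] F} {x : F} :
    x ∈ fixedField (Subgroup.zpowers σ) ↔ σ x = x :=
  ⟨fun h ↦ h ⟨σ, Subgroup.mem_zpowers σ⟩,
    fun h g ↦ (Subgroup.zpowers_le (H := MulAction.stabilizer (F ≃ₐ[K] F) x)).mpr h g.2⟩

theorem exists_eq_add_mul_of_mem_adjoin_simple (L : IntermediateField K F) {α a b : F}
    (ha : a ∈ L) (hb : b ∈ L) (hα : α ^ 2 = a * α + b) {x : F} (hx : x ∈ adjoin L {α}) :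
    ∃ p ∈ L, ∃ q ∈ L, x = p + q * α := by
  have hint : IsIntegral L α := by
    refine ⟨Polynomial.X ^ 2 - (Polynomial.C ⟨a, ha⟩ * Polynomial.X + Polynomial.C ⟨b, hb⟩),
      Polynomial.monic_X_pow_sub Polynomial.degree_linear_lt, ?_⟩
    simp [hα]
  rw [← mem_toSubalgebra, adjoin_simple_toSubalgebra_of_isAlgebraic hint.isAlgebraic] at hx
  induction hx using Algebra.adjoin_induction with
  | mem y hy => exact ⟨0, zero_mem L, 1, one_mem L, by rw [Set.mem_singleton_iff.mp hy]; ring⟩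
  | algebraMap y => exact ⟨y, y.2, 0, zero_mem L, by simp⟩
  | add y z _ _ hy hz =>
    obtain ⟨p, hp, q, hq, rfl⟩ := hy
    obtain ⟨p', hp', q', hq', rfl⟩ := hz
    exact ⟨p + p', add_mem hp hp', q + q', add_mem hq hq', by ring⟩
  | mul y z _ _ hy hz =>
    obtain ⟨p, hp, q, hq, rfl⟩ := hy
    obtain ⟨p', hp', q', hq', rfl⟩ := hz
    refine ⟨p * p' + q * q' * b, add_mem (mul_mem hp hp') (mul_mem (mul_mem hq hq') hb),
      p * q' + q * p' + q * q' * a,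
      add_mem (add_mem (mul_mem hp hq') (mul_mem hq hp')) (mul_mem (mul_mem hq hq') ha), ?_⟩
    linear_combination q * q' * hα

theorem eq_of_le_of_forall_eq_add_mul {L M : IntermediateField K F} {α : F} (hLM : L ≤ M)
    (hα : α ∉ M) (h : ∀ x : F, ∃ p ∈ L, ∃ q ∈ L, x = p + q * α) : M = L := by
  refine le_antisymm (fun x hx ↦ ?_) hLM
  obtain ⟨p, hp, q, hq, rfl⟩ := h x
  obtain rfl | hq0 := eq_or_ne q 0
  · simpa using hp
  · refine absurd ?_ hα
    rw [show α = ((p + q * α) - p) / q by field_simp; ring]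
    exact div_mem (sub_mem hx (hLM hp)) (hLM hq)

theorem mem_of_forall_algebraMap_X_mem {ι : Type*} [Algebra (MvPolynomial ι K) F]
    [IsScalarTower K (MvPolynomial ι K) F] [IsFractionRing (MvPolynomial ι K) F]
    (S : IntermediateField K F) (hS : ∀ i, algebraMap (MvPolynomial ι K) F (X i) ∈ S) (x : F) :
    x ∈ S := by
  have hpoly (p : MvPolynomial ι K) : algebraMap _ F p ∈ S := by
    induction p using MvPolynomial.induction_on with
    | C a =>
      rw [← MvPolynomial.algebraMap_eq, ← IsScalarTower.algebraMap_apply]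
      exact S.algebraMap_mem a
    | add p q hp hq => simpa using add_mem hp hq
    | mul_X p i hp => simpa using mul_mem hp (hS i)
  obtain ⟨a, b, -, rfl⟩ := IsFractionRing.div_surjective (A := MvPolynomial ι K) x
  exact div_mem (hpoly a) (hpoly b)

end IntermediateField

theorem MvPolynomial.algebraMap_ne_zero_of_eval_ne_zero {ι K F : Type*} [CommRing K]
    [CommRing F] [Algebra (MvPolynomial ι K) F] [IsFractionRing (MvPolynomial ι K) F]
    {p : MvPolynomial ι K} (v : ι → K) (hp : eval v p ≠ 0) :
    algebraMap (MvPolynomial ι K) F p ≠ 0 :=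
  (map_ne_zero_iff _ (IsFractionRing.injective _ F)).mpr fun h ↦ hp (by simp [h])

theorem mem_of_invariants_mem {F : Type*} [Field F] {c u₁ u₂ u₃ : F} (S : Subfield F)
    (h2 : (2 : F) ≠ 0) (hu₂ : u₂ ≠ 0) (hu₂' : u₂ + 1 ≠ 0) (hu₃ : u₃ ≠ 0) (hu₃c : u₃ ^ 2 - c ≠ 0)
    (hD : 3 * u₁ ^ 2 - u₂ ^ 2 + 1 ≠ 0) (hB : 3 * u₁ ^ 2 + u₂ ^ 2 + 2 * u₂ + 1 ≠ 0)
    (hcS : c ∈ S) (hu₃S : u₃ ∈ S) (hr₂ : u₁ * u₂ / (3 * u₁ ^ 2 - u₂ ^ 2 + 1) ∈ S)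
    (hr₃ : (3 * u₁ ^ 2 + u₂ ^ 2 + 2 * u₂ + 1) * (u₃ ^ 2 - c) /
      ((3 * u₁ ^ 2 - u₂ ^ 2 + 1) * u₃) ∈ S) :
    u₁ ∈ S ∧ u₂ ∈ S := by
  have hh : u₂ * (u₂ + 1) / (3 * u₁ ^ 2 - u₂ ^ 2 + 1) ∈ S := by
    rw [show u₂ * (u₂ + 1) / (3 * u₁ ^ 2 - u₂ ^ 2 + 1) =
        ((3 * u₁ ^ 2 + u₂ ^ 2 + 2 * u₂ + 1) * (u₃ ^ 2 - c) / ((3 * u₁ ^ 2 - u₂ ^ 2 + 1) * u₃) *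
          u₃ / (u₃ ^ 2 - c) - 1) / 2 by field_simp; ring]
    exact div_mem (sub_mem (div_mem (mul_mem hr₃ hu₃S) (sub_mem (pow_mem hu₃S 2) hcS))
      (one_mem S)) (ofNat_mem S 2)
  -- With `D = 3u₁² - u₂² + 1`, the identity `k² + k - 3r² = u₂ (3u₁² + u₂² + 2u₂ + 1) / D²`
  -- is linear in `u₂`; solving it gives `u₂`, and then `u₁ = r (u₂ + 1) / k`.
  generalize hr : u₁ * u₂ / (3 * u₁ ^ 2 - u₂ ^ 2 + 1) = r at hr₂
  generalize hk : u₂ * (u₂ + 1) / (3 * u₁ ^ 2 - u₂ ^ 2 + 1) = k at hh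
  have hden : k ^ 2 + k - 3 * r ^ 2 =
      u₂ * (3 * u₁ ^ 2 + u₂ ^ 2 + 2 * u₂ + 1) / (3 * u₁ ^ 2 - u₂ ^ 2 + 1) ^ 2 := by
    subst hr hk; field_simp; ring
  have hu₂S : u₂ ∈ S := by
    rw [show u₂ = (k ^ 2 + 3 * r ^ 2) / (k ^ 2 + k - 3 * r ^ 2) by
      rw [hden, eq_div_iff (by positivity)]; subst hr hk; field_simp; ring]
    exact div_mem (add_mem (pow_mem hh 2) (mul_mem (ofNat_mem S 3) (pow_mem hr₂ 2)))
      (sub_mem (add_mem (pow_mem hh 2) hh) (mul_mem (ofNat_mem S 3) (pow_mem hr₂ 2)))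
  refine ⟨?_, hu₂S⟩
  have hk0 : k ≠ 0 := hk ▸ div_ne_zero (mul_ne_zero hu₂ hu₂') hD
  rw [eq_div_of_mul_eq hk0 (by subst hr hk; field_simp : u₁ * k = r * (u₂ + 1))]
  exact div_mem (mul_mem hr₂ (add_mem hu₂S (one_mem S))) hh

theorem adjoin_invariants_le_fixedField {K F : Type*} [Field K] [Field F] [Algebra K F]
    (σ : F ≃ₐ[K] F) {f : K} {u₁ u₂ u₃ : F} (hσ₁ : σ u₁ = -u₁)
    (hσ₂ : σ u₂ = (3 * u₁ ^ 2 + 1) / u₂) (hσ₃ : σ u₃ = algebraMap K F f / u₃)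
    (hf : algebraMap K F f ≠ 0) (hu₂ : u₂ ≠ 0) (hu₃ : u₃ ≠ 0) (hA : 3 * u₁ ^ 2 + 1 ≠ 0)
    (hD : 3 * u₁ ^ 2 - u₂ ^ 2 + 1 ≠ 0) :
    adjoin K {(u₃ ^ 2 + algebraMap K F f) / u₃,
                u₁ * u₂ / (3 * u₁ ^ 2 - u₂ ^ 2 + 1),
                (3 * u₁ ^ 2 + u₂ ^ 2 + 2 * u₂ + 1) * (u₃ ^ 2 - algebraMap K F f) /
                  ((3 * u₁ ^ 2 - u₂ ^ 2 + 1) * u₃)} ≤ fixedField (Subgroup.zpowers σ) := by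
  have hσD : σ (3 * u₁ ^ 2 - u₂ ^ 2 + 1) =
      -((3 * u₁ ^ 2 + 1) * (3 * u₁ ^ 2 - u₂ ^ 2 + 1)) / u₂ ^ 2 := by
    simp only [map_add, map_sub, map_mul, map_pow, map_one, map_ofNat, hσ₁, hσ₂]
    field_simp
    ring
  rw [adjoin_le_iff]
  rintro _ (rfl | rfl | rfl) <;> rw [SetLike.mem_coe, mem_fixedField_zpowers_iff_s17]
  · simp only [map_div₀, map_add, map_pow, hσ₃, σ.commutes]
    field_simp
    ring
  · rw [map_div₀, hσD, map_mul, hσ₁, hσ₂, div_eq_div_iff (by simp [*]) hD]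
    field_simp
  · rw [map_div₀, map_mul, map_mul, hσD, hσ₃]
    simp only [map_add, map_sub, map_mul, map_pow, map_one, map_ofNat, hσ₁, hσ₂, hσ₃, σ.commutes]
    field_simp
    ring

theorem exists_eq_add_mul_of_invariants_mem {K F : Type*} [Field K] [Field F] [Algebra K F]
    [Algebra (MvPolynomial (Fin 3) K) F] [IsScalarTower K (MvPolynomial (Fin 3) K) F]
    [IsFractionRing (MvPolynomial (Fin 3) K) F] {f : K} {u₁ u₂ u₃ : F}
    (hu₁ : u₁ = algebraMap (MvPolynomial (Fin 3) K) F (X 0))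
    (hu₂ : u₂ = algebraMap (MvPolynomial (Fin 3) K) F (X 1))
    (hu₃ : u₃ = algebraMap (MvPolynomial (Fin 3) K) F (X 2))
    (h2 : (2 : F) ≠ 0) (hu₂0 : u₂ ≠ 0) (hu₂1 : u₂ + 1 ≠ 0) (hu₃0 : u₃ ≠ 0)
    (hu₃f : u₃ ^ 2 - algebraMap K F f ≠ 0) (hD : 3 * u₁ ^ 2 - u₂ ^ 2 + 1 ≠ 0)
    (hB : 3 * u₁ ^ 2 + u₂ ^ 2 + 2 * u₂ + 1 ≠ 0) (L : IntermediateField K F)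
    (hr₁ : (u₃ ^ 2 + algebraMap K F f) / u₃ ∈ L)
    (hr₂ : u₁ * u₂ / (3 * u₁ ^ 2 - u₂ ^ 2 + 1) ∈ L)
    (hr₃ : (3 * u₁ ^ 2 + u₂ ^ 2 + 2 * u₂ + 1) * (u₃ ^ 2 - algebraMap K F f) /
      ((3 * u₁ ^ 2 - u₂ ^ 2 + 1) * u₃) ∈ L) (x : F) :
    ∃ p ∈ L, ∃ q ∈ L, x = p + q * u₃ := by
  have hquad : u₃ ^ 2 = (u₃ ^ 2 + algebraMap K F f) / u₃ * u₃ + -algebraMap K F f := by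
    field_simp; ring
  refine exists_eq_add_mul_of_mem_adjoin_simple L hr₁ (neg_mem (L.algebraMap_mem f)) hquad ?_
  have hL {y : F} (hy : y ∈ L) : y ∈ adjoin L {u₃} :=
    IntermediateField.algebraMap_mem (adjoin L {u₃}) ⟨y, hy⟩
  have hu₃L := mem_adjoin_simple_self L u₃
  obtain ⟨hu₁L, hu₂L⟩ := mem_of_invariants_mem (adjoin L {u₃}).toSubfield h2 hu₂0 hu₂1 hu₃0
    hu₃f hD hB (hL (L.algebraMap_mem f)) hu₃L (hL hr₂) (hL hr₃)
  refine mem_of_forall_algebraMap_X_mem (ι := Fin 3) ((adjoin L {u₃}).restrictScalars K)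
    (fun i ↦ ?_) x
  fin_cases i
  exacts [hu₁ ▸ hu₁L, hu₂ ▸ hu₂L, hu₃ ▸ hu₃L]

theorem fixed_field_lem522 (K F : Type*) [Field K] [Field F]
    [Algebra K F] [Algebra (MvPolynomial (Fin 3) K) F]
    [IsScalarTower K (MvPolynomial (Fin 3) K) F]
    [IsFractionRing (MvPolynomial (Fin 3) K) F]
    (h2 : (2 : K) ≠ 0) (f : K) (hf : f ≠ 0)
    (u₁ u₂ u₃ : F)
    (hu₁ : u₁ = algebraMap (MvPolynomial (Fin 3) K) F (X 0))
    (hu₂ : u₂ = algebraMap (MvPolynomial (Fin 3) K) F (X 1))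
    (hu₃ : u₃ = algebraMap (MvPolynomial (Fin 3) K) F (X 2))
    (σ : F ≃ₐ[K] F)
    (hσ₁ : σ u₁ = -u₁)
    (hσ₂ : σ u₂ = (3 * u₁ ^ 2 + 1) / u₂)
    (hσ₃ : σ u₃ = algebraMap K F f / u₃) :
    fixedField (Subgroup.zpowers σ) =
      adjoin K {(u₃ ^ 2 + algebraMap K F f) / u₃,
                u₁ * u₂ / (3 * u₁ ^ 2 - u₂ ^ 2 + 1),
                (3 * u₁ ^ 2 + u₂ ^ 2 + 2 * u₂ + 1) * (u₃ ^ 2 - algebraMap K F f) /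
                  ((3 * u₁ ^ 2 - u₂ ^ 2 + 1) * u₃)} := by
  have hne (p : MvPolynomial (Fin 3) K) (v : Fin 3 → K) (hp : eval v p ≠ 0) :=
    algebraMap_ne_zero_of_eval_ne_zero (F := F) v hp
  have hfF : algebraMap K F f ≠ 0 := (map_ne_zero _).mpr hf
  have h2F : (2 : F) ≠ 0 := by
    rw [← map_ofNat (algebraMap K F) 2]; exact (map_ne_zero _).mpr h2
  have hu₂0 : u₂ ≠ 0 := hu₂ ▸ hne (X 1) 1 (by simp)
  have hu₃0 : u₃ ≠ 0 := hu₃ ▸ hne (X 2) 1 (by simp)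
  have hu₂1 : u₂ + 1 ≠ 0 := by convert hne (X 1 + 1) 0 (by simp) using 2; simp [hu₂]
  have hA : 3 * u₁ ^ 2 + 1 ≠ 0 := by
    convert hne (3 * X 0 ^ 2 + 1) 0 (by simp) using 2; simp [hu₁, map_ofNat]
  have hD : 3 * u₁ ^ 2 - u₂ ^ 2 + 1 ≠ 0 := by
    convert hne (3 * X 0 ^ 2 - X 1 ^ 2 + 1) 0 (by simp) using 2
    simp [hu₁, hu₂, map_ofNat]
  have hB : 3 * u₁ ^ 2 + u₂ ^ 2 + 2 * u₂ + 1 ≠ 0 := by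
    convert hne (3 * X 0 ^ 2 + X 1 ^ 2 + 2 * X 1 + 1) 0 (by simp) using 2
    simp [hu₁, hu₂, map_ofNat]
  have hu₃f : u₃ ^ 2 - algebraMap K F f ≠ 0 := by
    convert hne (X 2 ^ 2 - C f) 0 (by simp [hf]) using 2
    simp [hu₃, IsScalarTower.algebraMap_apply K (MvPolynomial (Fin 3) K) F]
  refine eq_of_le_of_forall_eq_add_mul (α := u₃)
    (adjoin_invariants_le_fixedField σ hσ₁ hσ₂ hσ₃ hfF hu₂0 hu₃0 hA hD) ?_
    (exists_eq_add_mul_of_invariants_mem hu₁ hu₂ hu₃ h2F hu₂0 hu₂1 hu₃0 hu₃f hD hB _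
      (subset_adjoin K _ (by simp)) (subset_adjoin K _ (by simp)) (subset_adjoin K _ (by simp)))
  rw [mem_fixedField_zpowers_iff_s17, hσ₃, div_eq_iff hu₃0]
  exact fun h ↦ hu₃f (by linear_combination -h)
end
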